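/- arXiv:2601.02355 — 2 statements merged into one kernel-verified Lean document; each statement's English description precedes it below -/
import Mathlib

section
/- Let L be a code loop of rank n with basis B = {a₁, …, aₙ}, and for σ ⊆ {1,…,n} let a_σ be the left-normed product of the aᵢ with i ∈ σ taken in increasing order (a_∅ = 1), so that L = {a_σ, −a_σ : σ ⊆ {1,…,n}}. Let φ be a half-automorphism of L fixing every element of B. Then for every σ one has φ(a_σ) ∈ {a_σ, −a_σ} and φ(−a_σ) = −φ(a_σ), and the sign function Ψ defined by φ(a_σ) = Ψ(σ)·a_σ satisfies Ψ(∅) = 1, Ψ({j}) = 1 for every j, and Ψ(σ△μ) = Ψ(σ)·Ψ(μ) whenever a_σ·a_μ = a_μ·a_σ, where △ denotes symmetric difference. -/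
/-- A loop: a binary operation with two-sided identity in which left and right
translations are bijections (equivalently, equations `a·x = b` and `y·a = b`
have unique solutions). -/
structure LoopStr (α : Type*) where
  mul : α → α → α
  one : α
  one_mul : ∀ x, mul one x = x
  mul_one : ∀ x, mul x one = x
  mulLeft_bij : ∀ a, Function.Bijective (fun x => mul a x)
  mulRight_bij : ∀ a, Function.Bijective (fun x => mul x a)

namespace LoopStr

variable {α : Type*} (S : LoopStr α)

/-- A subset containing `1` and closed under multiplication and (left and right) inverses. -/
def IsClosed (T : Set α) : Prop :=
  S.one ∈ T ∧ (∀ x ∈ T, ∀ y ∈ T, S.mul x y ∈ T) ∧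
    (∀ x ∈ T, ∀ y, S.mul x y = S.one → y ∈ T) ∧
    (∀ x ∈ T, ∀ y, S.mul y x = S.one → y ∈ T)

/-- The subloop generated by a set: the smallest closed subset containing it. -/
def gen (X : Set α) : Set α := ⋂₀ {T | X ⊆ T ∧ S.IsClosed T}

def Generates (X : Set α) : Prop := S.gen X = Set.univ

/-- A basis: a minimal generating set. -/
def IsBasis (X : Set α) : Prop := S.Generates X ∧ ∀ Y ⊂ X, ¬ S.Generates Y

def IsHalfAut (f : α → α) : Prop :=
  Function.Bijective f ∧
    ∀ x y, f (S.mul x y) = S.mul (f x) (f y) ∨ f (S.mul x y) = S.mul (f y) (f x)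

def IsAut (f : α → α) : Prop :=
  Function.Bijective f ∧ ∀ x y, f (S.mul x y) = S.mul (f x) (f y)

def IsAntiAut (f : α → α) : Prop :=
  Function.Bijective f ∧ ∀ x y, f (S.mul x y) = S.mul (f y) (f x)

/-- The commutant of a loop. -/
def commutant : Set α := {c | ∀ x, S.mul c x = S.mul x c}

/-- The nucleus of a loop. -/
def nucleus : Set α :=
  {a | ∀ u v, S.mul (S.mul a u) v = S.mul a (S.mul u v) ∧
        S.mul (S.mul u a) v = S.mul u (S.mul a v) ∧
        S.mul (S.mul u v) a = S.mul u (S.mul v a)}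

end LoopStr

/-- A code loop: a finite Moufang loop with a unique nontrivial square `neg` (written `-1`),
which (by Chein–Goodaire) is central of order 2, and all squares, commutators and
associators lie in `{1, neg}`. -/
structure CodeLoop (α : Type*) extends LoopStr α where
  finite : Finite α
  moufang : ∀ x y z, mul (mul x (mul z x)) y = mul x (mul z (mul x y))
  neg : α
  neg_ne_one : neg ≠ one
  neg_is_square : ∃ x, mul x x = neg
  square_unique : ∀ m, m ≠ one → (∃ x, mul x x = m) → m = neg
  neg_mul_comm : ∀ x, mul neg x = mul x neg
  neg_mul_assoc₁ : ∀ x y, mul (mul neg x) y = mul neg (mul x y)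
  neg_mul_assoc₂ : ∀ x y, mul (mul x neg) y = mul x (mul neg y)
  neg_mul_assoc₃ : ∀ x y, mul (mul x y) neg = mul x (mul y neg)
  neg_neg : mul neg neg = one
  square_mem : ∀ x, mul x x = one ∨ mul x x = neg
  comm_mem : ∀ x y, mul x y = mul y x ∨ mul x y = mul (mul y x) neg
  assoc_mem : ∀ x y z, mul (mul x y) z = mul x (mul y z) ∨
      mul (mul x y) z = mul (mul x (mul y z)) neg

/-- The left-normed product `a_σ` of the basis elements indexed by `σ`, in increasing order. -/
def aSig {α : Type*} (S : LoopStr α) {n : ℕ} (a : Fin n → α) (σ : Finset (Fin n)) : α :=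
  ((σ.sort (· ≤ ·)).map a).foldl S.mul S.one


/-!
Modulo `{1, -1}` a code loop is an elementary abelian 2-group, in which `a_σ` becomes
`∏ i ∈ σ, aᵢ`. Since this quotient is commutative, `x ↦ [φ x]` is multiplicative whichever of
`φ x · φ y`, `φ y · φ x` equals `φ (x y)`; as it fixes the basis, it agrees with the projection,
so `φ(a_σ) = ±a_σ`. When `a_σ` and `a_μ` commute, both candidates for `φ(a_σ a_μ)` equal
`Ψ(σ)Ψ(μ) a_σ a_μ`, while `a_σ a_μ = ±a_{σ△μ}` and `φ` commutes with `-1`; comparing signs gives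
`Ψ(σ△μ) = Ψ(σ)Ψ(μ)`.
-/

open Finset

theorem Finset.prod_symmDiff_of_mul_self {ι M : Type*} [CommMonoid M] [DecidableEq ι]
    {g : ι → M} (hg : ∀ i, g i * g i = 1) (s t : Finset ι) :
    ∏ i ∈ symmDiff s t, g i = (∏ i ∈ s, g i) * ∏ i ∈ t, g i := by
  have hsq : (∏ i ∈ s ∩ t, g i) * ∏ i ∈ s ∩ t, g i = 1 := by
    rw [← prod_mul_distrib, prod_eq_one fun i _ => hg i]
  rw [symmDiff_eq_sup_sdiff_inf, sup_eq_union, inf_eq_inter, ← prod_union_inter,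
    ← prod_sdiff inter_subset_union, mul_assoc, hsq, mul_one]

namespace LoopStr

variable {α : Type*} {S : LoopStr α}

theorem IsHalfAut.map_one {φ : α → α} (hφ : S.IsHalfAut φ) : φ S.one = S.one := by
  have hsq : S.mul (φ S.one) (φ S.one) = S.mul (φ S.one) S.one := by
    rw [S.mul_one]
    rcases hφ.2 S.one S.one with h | h <;> rw [← h, S.one_mul]
  exact (S.mulLeft_bij _).1 hsq

end LoopStr

section aSig

variable {α : Type*} (S : LoopStr α) {n : ℕ} (a : Fin n → α)

theorem aSig_empty : aSig S a ∅ = S.one := by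
  simp [aSig]

theorem aSig_singleton (j : Fin n) : aSig S a {j} = a j := by
  simp [aSig, S.one_mul]

theorem map_aSig {M : Type*} [CommMonoid M] {f : α → M} (hf_one : f S.one = 1)
    (hf_mul : ∀ x y, f (S.mul x y) = f x * f y) (σ : Finset (Fin n)) :
    f (aSig S a σ) = ∏ i ∈ σ, f (a i) := by
  have hfold : ∀ (l : List α) (x : α),
      f (l.foldl S.mul x) = f x * (l.map f).prod := by
    intro l
    induction l with
    | nil => simp
    | cons y l ih => intro x; simp [ih, hf_mul, mul_assoc]
  rw [aSig, hfold, hf_one, one_mul, List.map_map, ← Multiset.prod_coe, ← Multiset.map_coe,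
    Finset.sort_eq]
  rfl

end aSig

namespace CodeLoop

variable {α : Type*} (C : CodeLoop α)

theorem neg_mul_neg_mul (y : α) : C.mul C.neg (C.mul C.neg y) = y := by
  rw [← C.neg_mul_assoc₁, C.neg_neg, C.one_mul]

theorem mul_neg_mul (x y : α) : C.mul x (C.mul C.neg y) = C.mul C.neg (C.mul x y) := by
  rw [← C.neg_mul_assoc₂, ← C.neg_mul_comm, C.neg_mul_assoc₁]

theorem neg_mul_ne_self (x : α) : C.mul C.neg x ≠ x := fun h =>
  C.neg_ne_one ((C.mulRight_bij x).1 (h.trans (C.one_mul x).symm))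

def signSetoid : Setoid α where
  r x y := x = y ∨ x = C.mul C.neg y
  iseqv := {
    refl := fun _ => Or.inl rfl
    symm := by
      rintro x y (rfl | rfl)
      exacts [Or.inl rfl, Or.inr (C.neg_mul_neg_mul y).symm]
    trans := by
      rintro x y z (rfl | rfl) (rfl | rfl)
      exacts [Or.inl rfl, Or.inr rfl, Or.inr rfl, Or.inl (C.neg_mul_neg_mul z)] }

abbrev SignQuotient : Type _ := Quotient C.signSetoid

def proj : α → C.SignQuotient := Quotient.mk _

theorem proj_eq_proj_iff {x y : α} : C.proj x = C.proj y ↔ x = y ∨ x = C.mul C.neg y :=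
  Quotient.eq

theorem proj_neg_mul (x : α) : C.proj (C.mul C.neg x) = C.proj x :=
  C.proj_eq_proj_iff.2 (Or.inr rfl)

theorem proj_mul_swap (x y : α) : C.proj (C.mul x y) = C.proj (C.mul y x) := by
  rcases C.comm_mem x y with h | h
  · rw [h]
  · rw [h, ← C.neg_mul_comm, proj_neg_mul]

theorem proj_mul_congr {x x' y y' : α} (hx : C.proj x = C.proj x')
    (hy : C.proj y = C.proj y') : C.proj (C.mul x y) = C.proj (C.mul x' y') := by
  rcases C.proj_eq_proj_iff.1 hx with rfl | rfl <;>
    rcases C.proj_eq_proj_iff.1 hy with rfl | rfl <;>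
    simp only [C.neg_mul_assoc₁, mul_neg_mul, proj_neg_mul]

instance : CommGroup C.SignQuotient where
  mul := Quotient.map₂ C.mul fun _ _ hx _ _ hy =>
    Quotient.exact (C.proj_mul_congr (Quotient.sound hx) (Quotient.sound hy))
  one := C.proj C.one
  inv := id
  mul_assoc := by
    rintro ⟨x⟩ ⟨y⟩ ⟨z⟩
    change C.proj _ = C.proj _
    rcases C.assoc_mem x y z with h | h
    · rw [h]
    · rw [h, ← C.neg_mul_comm, proj_neg_mul]
  one_mul := by rintro ⟨x⟩; exact congrArg C.proj (C.one_mul x)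
  mul_one := by rintro ⟨x⟩; exact congrArg C.proj (C.mul_one x)
  inv_mul_cancel := by
    rintro ⟨x⟩
    change C.proj _ = C.proj _
    rcases C.square_mem x with h | h
    · rw [h]
    · rw [h, ← C.mul_one C.neg, proj_neg_mul]
  mul_comm := by rintro ⟨x⟩ ⟨y⟩; exact C.proj_mul_swap x y

theorem proj_mul (x y : α) : C.proj (C.mul x y) = C.proj x * C.proj y := rfl

theorem proj_one : C.proj C.one = 1 := rfl

theorem proj_mul_self (x : α) : C.proj x * C.proj x = 1 :=
  inv_mul_cancel (C.proj x)

theorem mul_aSig_eq_or {n : ℕ} (a : Fin n → α) (σ μ : Finset (Fin n)) :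
    C.mul (aSig C.toLoopStr a σ) (aSig C.toLoopStr a μ) = aSig C.toLoopStr a (symmDiff σ μ) ∨
      C.mul (aSig C.toLoopStr a σ) (aSig C.toLoopStr a μ) =
        C.mul C.neg (aSig C.toLoopStr a (symmDiff σ μ)) := by
  refine C.proj_eq_proj_iff.1 ?_
  simp only [proj_mul, map_aSig C.toLoopStr a C.proj_one C.proj_mul,
    prod_symmDiff_of_mul_self fun i => C.proj_mul_self (a i)]

def IsSign (ε : α) : Prop := ε = C.one ∨ ε = C.neg

variable {C}

theorem IsSign.mul_mul_mul {ε δ : α} (hε : C.IsSign ε) (hδ : C.IsSign δ) (x y : α) :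
    C.mul (C.mul ε x) (C.mul δ y) = C.mul (C.mul ε δ) (C.mul x y) := by
  rcases hε with rfl | rfl <;> rcases hδ with rfl | rfl <;>
    simp only [C.one_mul, C.mul_one, C.neg_mul_assoc₁, mul_neg_mul, neg_mul_neg_mul, C.neg_neg]

theorem IsSign.mul_comm {ε δ : α} (hε : C.IsSign ε) (hδ : C.IsSign δ) :
    C.mul ε δ = C.mul δ ε := by
  rcases hε with rfl | rfl <;> rcases hδ with rfl | rfl <;> simp only [C.one_mul, C.mul_one]

theorem IsSign.mul {ε δ : α} (hε : C.IsSign ε) (hδ : C.IsSign δ) : C.IsSign (C.mul ε δ) := by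
  rcases hε with rfl | rfl <;> rcases hδ with rfl | rfl <;>
    simp only [IsSign, C.one_mul, C.mul_one, C.neg_neg, true_or, or_true]

end CodeLoop

namespace LoopStr.IsHalfAut

open CodeLoop

variable {α : Type*} {C : CodeLoop α} {φ : α → α}

theorem map_neg (hφ : C.IsHalfAut φ) : φ C.neg = C.neg := by
  obtain ⟨x, hx⟩ := C.neg_is_square
  have hsq : φ C.neg = C.mul (φ x) (φ x) := by
    rw [← hx]; rcases hφ.2 x x with h | h <;> exact h
  rcases C.square_mem (φ x) with h | h
  · refine absurd (hφ.1.1 ?_) C.neg_ne_one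
    rw [hsq, h, hφ.map_one]
  · rw [hsq, h]

theorem map_neg_mul (hφ : C.IsHalfAut φ) (y : α) :
    φ (C.mul C.neg y) = C.mul C.neg (φ y) := by
  rcases hφ.2 C.neg y with h | h <;> rw [h, hφ.map_neg]
  exact (C.neg_mul_comm _).symm

theorem proj_map_mul (hφ : C.IsHalfAut φ) (x y : α) :
    C.proj (φ (C.mul x y)) = C.proj (φ x) * C.proj (φ y) := by
  rcases hφ.2 x y with h | h <;> rw [h, proj_mul]
  exact mul_comm _ _

theorem map_aSig_eq_or (hφ : C.IsHalfAut φ) {n : ℕ} {a : Fin n → α}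
    (hφa : ∀ i, φ (a i) = a i) (σ : Finset (Fin n)) :
    φ (aSig C.toLoopStr a σ) = aSig C.toLoopStr a σ ∨
      φ (aSig C.toLoopStr a σ) = C.mul C.neg (aSig C.toLoopStr a σ) := by
  refine C.proj_eq_proj_iff.1 ?_
  rw [map_aSig C.toLoopStr a (f := fun x => C.proj (φ x)) (by rw [hφ.map_one, proj_one])
      (proj_map_mul hφ), map_aSig C.toLoopStr a C.proj_one C.proj_mul]
  simp only [hφa]

theorem map_mul_of_commute (hφ : C.IsHalfAut φ) {x y ε δ : α}
    (hε : C.IsSign ε) (hδ : C.IsSign δ)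
    (hx : φ x = C.mul ε x) (hy : φ y = C.mul δ y) (hxy : C.mul x y = C.mul y x) :
    φ (C.mul x y) = C.mul (C.mul ε δ) (C.mul x y) := by
  rcases hφ.2 x y with h | h
  · rw [h, hx, hy, hε.mul_mul_mul hδ]
  · rw [h, hx, hy, hδ.mul_mul_mul hε, ← hxy, hδ.mul_comm hε]

end LoopStr.IsHalfAut

namespace CodeLoop

variable {α : Type*} (C : CodeLoop α)

open Classical in
noncomputable def signAt (φ : α → α) (x : α) : α := if φ x = x then C.one else C.neg

variable {C} {φ : α → α}

theorem isSign_signAt (x : α) : C.IsSign (C.signAt φ x) := by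
  unfold signAt; split_ifs <;> simp [IsSign]

theorem map_eq_signAt_mul {x : α} (hx : φ x = x ∨ φ x = C.mul C.neg x) :
    φ x = C.mul (C.signAt φ x) x := by
  unfold signAt
  split_ifs with h
  · rwa [C.one_mul]
  · exact hx.resolve_left h

theorem signAt_eq {x ε : α} (hε : C.IsSign ε) (hx : φ x = C.mul ε x) : C.signAt φ x = ε := by
  rcases hε with rfl | rfl
  · rw [C.one_mul] at hx; simp [signAt, hx]
  · simp [signAt, hx, C.neg_mul_ne_self]

theorem signAt_neg_mul (hφ : C.IsHalfAut φ) (x : α) :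
    C.signAt φ (C.mul C.neg x) = C.signAt φ x := by
  have hiff : C.mul C.neg (φ x) = C.mul C.neg x ↔ φ x = x :=
    ⟨fun h => (C.mulLeft_bij C.neg).1 h, congrArg _⟩
  rw [signAt, signAt, hφ.map_neg_mul]
  congr 1
  exact propext hiff

theorem signAt_mul_of_commute (hφ : C.IsHalfAut φ) {x y : α}
    (hx : φ x = x ∨ φ x = C.mul C.neg x) (hy : φ y = y ∨ φ y = C.mul C.neg y)
    (hxy : C.mul x y = C.mul y x) :
    C.signAt φ (C.mul x y) = C.mul (C.signAt φ x) (C.signAt φ y) :=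
  signAt_eq ((isSign_signAt x).mul (isSign_signAt y))
    (hφ.map_mul_of_commute (isSign_signAt x) (isSign_signAt y)
      (map_eq_signAt_mul hx) (map_eq_signAt_mul hy) hxy)

end CodeLoop

open CodeLoop

theorem stmt5_general {α : Type*} (C : CodeLoop α) {n : ℕ} (a : Fin n → α)
    (φ : α → α) (hφ : C.toLoopStr.IsHalfAut φ) (hφB : ∀ i, φ (a i) = a i) :
    (∀ σ : Finset (Fin n), φ (aSig C.toLoopStr a σ) = aSig C.toLoopStr a σ ∨
        φ (aSig C.toLoopStr a σ) = C.mul C.neg (aSig C.toLoopStr a σ)) ∧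
    (∀ σ : Finset (Fin n), φ (C.mul C.neg (aSig C.toLoopStr a σ)) =
        C.mul C.neg (φ (aSig C.toLoopStr a σ))) ∧
    ∃ Ψ : Finset (Fin n) → α,
      (∀ σ, Ψ σ = C.one ∨ Ψ σ = C.neg) ∧
      (∀ σ, φ (aSig C.toLoopStr a σ) = C.mul (Ψ σ) (aSig C.toLoopStr a σ)) ∧
      Ψ ∅ = C.one ∧ (∀ j, Ψ {j} = C.one) ∧
      (∀ σ μ : Finset (Fin n),
        C.mul (aSig C.toLoopStr a σ) (aSig C.toLoopStr a μ) =
          C.mul (aSig C.toLoopStr a μ) (aSig C.toLoopStr a σ) →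
        Ψ (symmDiff σ μ) = C.mul (Ψ σ) (Ψ μ)) := by
  have hsign := hφ.map_aSig_eq_or hφB
  refine ⟨hsign, fun σ => hφ.map_neg_mul _, fun σ => C.signAt φ (aSig C.toLoopStr a σ),
    fun σ => isSign_signAt _, fun σ => map_eq_signAt_mul (hsign σ), ?_, fun j => ?_, ?_⟩ <;>
    dsimp only
  · rw [aSig_empty]
    exact signAt_eq (Or.inl rfl) (by rw [hφ.map_one, C.one_mul])
  · rw [aSig_singleton]
    exact signAt_eq (Or.inl rfl) (by rw [hφB, C.one_mul])
  · intro σ μ hcomm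
    rw [← signAt_mul_of_commute hφ (hsign σ) (hsign μ) hcomm]
    rcases C.mul_aSig_eq_or a σ μ with h | h <;> rw [h]
    exact (signAt_neg_mul hφ _).symm

/-- A half-automorphism fixing every element of a basis acts on each `a_σ` by a sign
`Ψ(σ) ∈ {1, -1}` with `Ψ(∅) = Ψ({j}) = 1`, and `Ψ(σ Δ μ) = Ψ(σ)·Ψ(μ)` whenever
`a_σ` and `a_μ` commute; moreover `φ(-a_σ) = -φ(a_σ)`. -/
theorem stmt5 {α : Type*} (C : CodeLoop α) {n : ℕ} (a : Fin n → α)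
    (hinj : Function.Injective a) (hbasis : C.toLoopStr.IsBasis (Set.range a))
    (hcover : ∀ x : α, ∃ σ : Finset (Fin n),
        x = aSig C.toLoopStr a σ ∨ x = C.mul C.neg (aSig C.toLoopStr a σ))
    (φ : α → α) (hφ : C.toLoopStr.IsHalfAut φ) (hφB : ∀ i, φ (a i) = a i) :
    (∀ σ : Finset (Fin n), φ (aSig C.toLoopStr a σ) = aSig C.toLoopStr a σ ∨
        φ (aSig C.toLoopStr a σ) = C.mul C.neg (aSig C.toLoopStr a σ)) ∧
    (∀ σ : Finset (Fin n), φ (C.mul C.neg (aSig C.toLoopStr a σ)) =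
        C.mul C.neg (φ (aSig C.toLoopStr a σ))) ∧
    ∃ Ψ : Finset (Fin n) → α,
      (∀ σ, Ψ σ = C.one ∨ Ψ σ = C.neg) ∧
      (∀ σ, φ (aSig C.toLoopStr a σ) = C.mul (Ψ σ) (aSig C.toLoopStr a σ)) ∧
      Ψ ∅ = C.one ∧ (∀ j, Ψ {j} = C.one) ∧
      (∀ σ μ : Finset (Fin n),
        C.mul (aSig C.toLoopStr a σ) (aSig C.toLoopStr a μ) =
          C.mul (aSig C.toLoopStr a μ) (aSig C.toLoopStr a σ) →
        Ψ (symmDiff σ μ) = C.mul (Ψ σ) (Ψ μ)) :=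
  stmt5_general C a φ hφ hφB
end

section
/- Let L be a code loop with basis B = {a₁, …, aₙ}. Then for every half-automorphism f of L there exist a unique automorphism h of L and a unique half-automorphism φ of L fixing every element of B such that f = h∘φ. In particular, Half(L) = Aut(L)·H_B(L). -/
section Stmt7Aux

variable {α : Type*}

namespace LoopStr

variable (S : LoopStr α)

theorem gen_subset (X : Set α) : X ⊆ S.gen X := by
  intro x hx T hT
  exact hT.1 hx

theorem gen_min {X T : Set α} (h1 : X ⊆ T) (h2 : S.IsClosed T) : S.gen X ⊆ T := by
  intro x hx
  exact hx T ⟨h1, h2⟩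

theorem gen_closed (X : Set α) : S.IsClosed (S.gen X) := by
  refine ⟨?_, ?_, ?_, ?_⟩
  · intro T hT; exact hT.2.1
  · intro x hx y hy T hT; exact hT.2.2.1 x (hx T hT) y (hy T hT)
  · intro x hx y hy T hT; exact hT.2.2.2.1 x (hx T hT) y hy
  · intro x hx y hy T hT; exact hT.2.2.2.2 x (hx T hT) y hy

theorem gen_mono {X Y : Set α} (h : X ⊆ Y) : S.gen X ⊆ S.gen Y :=
  gen_min S (h.trans (gen_subset S Y)) (gen_closed S Y)

end LoopStr

namespace CodeLoop

variable (C : CodeLoop α)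

theorem mlc {a x y : α} (h : C.mul a x = C.mul a y) : x = y := (C.mulLeft_bij a).1 h

theorem mrc {a x y : α} (h : C.mul x a = C.mul y a) : x = y := (C.mulRight_bij a).1 h

/-- `x · ν^b` -/
def mn (x : α) (b : Bool) : α := if b then C.mul x C.neg else x

@[simp] theorem mn_false (x : α) : C.mn x false = x := rfl
@[simp] theorem mn_true (x : α) : C.mn x true = C.mul x C.neg := rfl

theorem mul_nu_ne (x : α) : C.mul x C.neg ≠ x := by
  intro h
  exact C.neg_ne_one (C.mlc (h.trans (C.mul_one x).symm))

theorem mn_inj_b {x : α} {b b' : Bool} (h : C.mn x b = C.mn x b') : b = b' := by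
  cases b <;> cases b' <;> simp at h ⊢
  · exact C.mul_nu_ne x h.symm
  · exact C.mul_nu_ne x h

theorem mn_inj_x {x y : α} {b : Bool} (h : C.mn x b = C.mn y b) : x = y := by
  cases b
  · simpa using h
  · simp at h; exact C.mrc h

theorem mn_mul_left (x y : α) (b : Bool) : C.mul (C.mn x b) y = C.mn (C.mul x y) b := by
  cases b
  · rfl
  · simp only [mn_true]
    rw [C.neg_mul_assoc₂, C.neg_mul_comm y, ← C.neg_mul_assoc₃]

theorem mn_mul_right (x y : α) (b : Bool) : C.mul x (C.mn y b) = C.mn (C.mul x y) b := by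
  cases b
  · rfl
  · simp only [mn_true]
    exact (C.neg_mul_assoc₃ x y).symm

theorem mn_mn (x : α) (a b : Bool) : C.mn (C.mn x a) b = C.mn x (a ^^ b) := by
  cases a <;> cases b <;> simp
  rw [C.neg_mul_assoc₃, C.neg_neg, C.mul_one]

end CodeLoop

namespace CodeLoop

variable (C : CodeLoop α)

/-- Equality up to a central factor `ν`. -/
def relv (x y : α) : Prop := ∃ b, y = C.mn x b

theorem relv_refl (x : α) : C.relv x x := ⟨false, rfl⟩

theorem relv_symm {x y : α} (h : C.relv x y) : C.relv y x := by
  obtain ⟨b, rfl⟩ := h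
  exact ⟨b, by rw [C.mn_mn]; cases b <;> simp⟩

theorem relv_trans {x y z : α} (h1 : C.relv x y) (h2 : C.relv y z) : C.relv x z := by
  obtain ⟨b, rfl⟩ := h1
  obtain ⟨b', rfl⟩ := h2
  exact ⟨b ^^ b', by rw [C.mn_mn]⟩

theorem relv_mul {x x' y y' : α} (h1 : C.relv x x') (h2 : C.relv y y') :
    C.relv (C.mul x y) (C.mul x' y') := by
  obtain ⟨b, rfl⟩ := h1
  obtain ⟨b', rfl⟩ := h2
  exact ⟨b' ^^ b, by rw [C.mn_mul_left, C.mn_mul_right, C.mn_mn]⟩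

theorem relv_assoc (x y z : α) : C.relv (C.mul (C.mul x y) z) (C.mul x (C.mul y z)) := by
  rcases C.assoc_mem x y z with h | h
  · exact ⟨false, h.symm⟩
  · refine C.relv_symm ⟨true, ?_⟩
    simpa using h

theorem relv_comm (x y : α) : C.relv (C.mul x y) (C.mul y x) := by
  rcases C.comm_mem y x with h | h
  · exact ⟨false, h⟩
  · exact ⟨true, by simpa using h⟩

theorem sq_mn (x : α) : ∃ b, C.mul x x = C.mn C.one b := by
  rcases C.square_mem x with h | h
  · exact ⟨false, h⟩
  · exact ⟨true, by rw [h]; simp [C.one_mul]⟩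

theorem left_alt (x y : α) : C.mul (C.mul x x) y = C.mul x (C.mul x y) := by
  have h := C.moufang x y C.one
  rwa [C.one_mul, C.one_mul] at h

variable (f : α → α)

theorem f_one (hf : C.toLoopStr.IsHalfAut f) : f C.one = C.one := by
  have h : f (C.mul C.one C.one) = C.mul (f C.one) (f C.one) := by
    rcases hf.2 C.one C.one with h | h <;> exact h
  rw [C.one_mul] at h
  apply C.mlc (a := f C.one)
  rw [← h, C.mul_one]

theorem f_nu (hf : C.toLoopStr.IsHalfAut f) : f C.neg = C.neg := by
  obtain ⟨w, hw⟩ := C.neg_is_square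
  have h2 : f C.neg = C.mul (f w) (f w) := by
    rw [← hw]; rcases hf.2 w w with h | h <;> exact h
  have hne : f C.neg ≠ C.one := by
    rw [← f_one C f hf]
    exact fun h => C.neg_ne_one (hf.1.1 h)
  exact C.square_unique _ hne ⟨f w, h2.symm⟩

theorem f_mn (hf : C.toLoopStr.IsHalfAut f) (x : α) (b : Bool) : f (C.mn x b) = C.mn (f x) b := by
  cases b
  · rfl
  · simp only [mn_true]
    rcases hf.2 x C.neg with h | h
    · rw [h, f_nu C f hf]
    · rw [h, f_nu C f hf, C.neg_mul_comm]

open Classical in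
/-- the sign discrepancy of the half-automorphism `f` at `(x, y)` -/
noncomputable def eps (x y : α) : Bool :=
  if f (C.mul x y) = C.mul (f x) (f y) then false else true

theorem eps_spec (hf : C.toLoopStr.IsHalfAut f) (x y : α) :
    f (C.mul x y) = C.mn (C.mul (f x) (f y)) (eps C f x y) := by
  unfold eps
  split
  · next h => simpa using h
  · next h =>
    rcases hf.2 x y with h1 | h1
    · exact absurd h1 h
    · rw [h1]
      simp only [mn_true]
      rcases C.comm_mem (f y) (f x) with h2 | h2
      · exact absurd (h1.trans h2) h
      · exact h2

theorem eps_of_eq {x y : α} (h : f (C.mul x y) = C.mul (f x) (f y)) :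
    eps C f x y = false := by
  unfold eps
  split
  · rfl
  · next h' => exact absurd h h'

theorem eps_true_ne (hf : C.toLoopStr.IsHalfAut f) {x y : α} (h : eps C f x y = true) :
    C.mul (f x) (f y) ≠ C.mul (f y) (f x) := by
  unfold eps at h
  split at h
  · simp at h
  · next hne =>
    rcases hf.2 x y with h1 | h1
    · exact absurd h1 hne
    · intro hc; exact hne (h1.trans hc.symm)

theorem eps_one_left (hf : C.toLoopStr.IsHalfAut f) (y : α) : eps C f C.one y = false :=
  eps_of_eq C f (by rw [C.one_mul, f_one C f hf, C.one_mul])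

theorem eps_one_right (hf : C.toLoopStr.IsHalfAut f) (x : α) : eps C f x C.one = false :=
  eps_of_eq C f (by rw [C.mul_one, f_one C f hf, C.mul_one])

theorem eps_self (hf : C.toLoopStr.IsHalfAut f) (x : α) : eps C f x x = false :=
  eps_of_eq C f (by rcases hf.2 x x with h | h <;> exact h)

theorem eps_nu_right (hf : C.toLoopStr.IsHalfAut f) (x : α) : eps C f x C.neg = false := by
  apply eps_of_eq C f
  rw [f_nu C f hf]
  have := f_mn C f hf x true
  simpa using this

theorem eps_nu_left (hf : C.toLoopStr.IsHalfAut f) (y : α) : eps C f C.neg y = false := by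
  apply eps_of_eq C f
  rw [f_nu C f hf, C.neg_mul_comm y, C.neg_mul_comm (f y)]
  have := f_mn C f hf y true
  simpa using this

theorem eps_congr_left (hf : C.toLoopStr.IsHalfAut f) (x y : α) (b : Bool) : eps C f (C.mn x b) y = eps C f x y := by
  cases b
  · rfl
  · have e1 := eps_spec C f hf x y
    have e2 := eps_spec C f hf (C.mn x true) y
    rw [C.mn_mul_left, f_mn C f hf, f_mn C f hf, e1, C.mn_mn, C.mn_mul_left, C.mn_mn] at e2
    have := C.mn_inj_b e2
    cases h1 : eps C f x y <;> cases h2 : eps C f (C.mn x true) y <;>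
      rw [h1, h2] at this <;> simp_all

theorem eps_congr_right (hf : C.toLoopStr.IsHalfAut f) (x y : α) (b : Bool) : eps C f x (C.mn y b) = eps C f x y := by
  cases b
  · rfl
  · have e1 := eps_spec C f hf x y
    have e2 := eps_spec C f hf x (C.mn y true)
    rw [C.mn_mul_right, f_mn C f hf, f_mn C f hf, e1, C.mn_mn, C.mn_mul_right, C.mn_mn] at e2
    have := C.mn_inj_b e2
    cases h1 : eps C f x y <;> cases h2 : eps C f x (C.mn y true) <;>
      rw [h1, h2] at this <;> simp_all

theorem eps_rel_left (hf : C.toLoopStr.IsHalfAut f) {x x' : α} (y : α) (h : C.relv x x') : eps C f x' y = eps C f x y := by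
  obtain ⟨b, rfl⟩ := h
  exact eps_congr_left C f hf x y b

theorem eps_rel_right (hf : C.toLoopStr.IsHalfAut f) (x : α) {y y' : α} (h : C.relv y y') : eps C f x y' = eps C f x y := by
  obtain ⟨b, rfl⟩ := h
  exact eps_congr_right C f hf x y b

end CodeLoop


namespace CodeLoop

variable (C : CodeLoop α) (f : α → α)

theorem noncomm_image (hf : C.toLoopStr.IsHalfAut f) {x y : α}
    (hne : C.mul x y ≠ C.mul y x) : C.mul (f x) (f y) ≠ C.mul (f y) (f x) := by
  intro hc
  have h1 : f (C.mul x y) = C.mul (f x) (f y) := by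
    rcases hf.2 x y with h | h
    · exact h
    · rw [h, hc]
  have h2 : f (C.mul y x) = C.mul (f x) (f y) := by
    rcases hf.2 y x with h | h
    · rw [h, hc]
    · exact h
  exact hne (hf.1.1 (h1.trans h2.symm))

theorem comm_image (hf : C.toLoopStr.IsHalfAut f) {x y : α}
    (hc : C.mul x y = C.mul y x) : C.mul (f x) (f y) = C.mul (f y) (f x) := by
  have hfin : Finite α := C.finite
  by_contra hne
  set P : Set (α × α) := {p | C.mul p.1 p.2 ≠ C.mul p.2 p.1} with hP
  have ginj : Function.Injective (Prod.map f f) := Function.Injective.prodMap hf.1.1 hf.1.1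
  have hsub : Prod.map f f '' P ⊆ P := by
    rintro ⟨u, v⟩ ⟨⟨a, b⟩, hab, heq⟩
    simp only [Prod.map, Prod.mk.injEq] at heq
    obtain ⟨h1, h2⟩ := heq
    subst h1; subst h2
    exact noncomm_image C f hf hab
  have himg : Prod.map f f '' P = P := by
    apply Set.eq_of_subset_of_ncard_le hsub
    rw [Set.ncard_image_of_injective _ ginj]
  have hmem : (f x, f y) ∈ P := hne
  rw [← himg] at hmem
  obtain ⟨⟨a, b⟩, hab, heq⟩ := hmem
  simp only [Prod.map, Prod.mk.injEq] at heq
  obtain ⟨h1, h2⟩ := heq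
  have : a = x := hf.1.1 h1
  subst this
  have : b = y := hf.1.1 h2
  subst this
  exact hab hc

theorem eps_symm (hf : C.toLoopStr.IsHalfAut f) (x y : α) :
    eps C f x y = eps C f y x := by
  by_cases hc : C.mul x y = C.mul y x
  · have hfc := comm_image C f hf hc
    have e1 := eps_spec C f hf x y
    have e2 := eps_spec C f hf y x
    rw [← hc, ← hfc] at e2
    exact C.mn_inj_b (e1.symm.trans e2)
  · have hfc : C.mul (f x) (f y) ≠ C.mul (f y) (f x) := noncomm_image C f hf hc
    have hyx : C.mul y x = C.mn (C.mul x y) true := by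
      rcases C.comm_mem x y with h | h
      · exact absurd h hc
      · have : C.mul y x = C.mn (C.mn (C.mul y x) true) true := by
          rw [C.mn_mn]; simp
        rw [this]; simp only [mn_true] at h ⊢; rw [← h]
    have hfyx : C.mul (f y) (f x) = C.mn (C.mul (f x) (f y)) true := by
      rcases C.comm_mem (f x) (f y) with h | h
      · exact absurd h hfc
      · have : C.mul (f y) (f x) = C.mn (C.mn (C.mul (f y) (f x)) true) true := by
          rw [C.mn_mn]; simp
        rw [this]; simp only [mn_true] at h ⊢; rw [← h]
    have e2 := eps_spec C f hf y x
    rw [hyx, f_mn C f hf, eps_spec C f hf x y, C.mn_mn, hfyx, C.mn_mn] at e2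
    have h3 := C.mn_inj_b e2
    have hb : ∀ a b : Bool, (a ^^ true) = (true ^^ b) → a = b := by decide
    exact hb _ _ h3

theorem eps_E1 (hf : C.toLoopStr.IsHalfAut f) (x y z : α) :
    ((eps C f z x ^^ eps C f x (C.mul z x)) ^^ eps C f (C.mul x (C.mul z x)) y)
      = ((eps C f x y ^^ eps C f z (C.mul x y)) ^^ eps C f x (C.mul z (C.mul x y))) := by
  have h := congrArg f (C.moufang x y z)
  rw [eps_spec C f hf (C.mul x (C.mul z x)) y, eps_spec C f hf x (C.mul z x),
    eps_spec C f hf z x, eps_spec C f hf x (C.mul z (C.mul x y)),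
    eps_spec C f hf z (C.mul x y), eps_spec C f hf x y] at h
  simp only [mn_mul_left, mn_mul_right, mn_mn] at h
  rw [C.moufang (f x) (f y) (f z)] at h
  exact C.mn_inj_b h

theorem epsG (hf : C.toLoopStr.IsHalfAut f) (x y : α) :
    eps C f x (C.mul x y) = eps C f x y := by
  obtain ⟨b, hb⟩ := C.sq_mn x
  have h := eps_E1 C f hf x y x
  rw [eps_self C f hf] at h
  have r1 : eps C f x (C.mul x x) = false := by
    rw [hb, eps_congr_right C f hf, eps_one_right C f hf]
  have r2 : eps C f (C.mul x (C.mul x x)) y = eps C f x y := by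
    rw [hb, C.mn_mul_right, C.mul_one, eps_congr_left C f hf]
  have r3 : eps C f x (C.mul x (C.mul x y)) = eps C f x y := by
    rw [← C.left_alt, hb, C.mn_mul_left, C.one_mul, eps_congr_right C f hf]
  rw [r1, r2, r3] at h
  cases h1 : eps C f x (C.mul x y) <;> cases h2 : eps C f x y <;> rw [h1, h2] at h <;> simp_all

theorem eps_cocycle (hf : C.toLoopStr.IsHalfAut f) (x y z : α) :
    (eps C f x y ^^ eps C f (C.mul x y) z) = (eps C f y z ^^ eps C f x (C.mul y z)) := by
  have h := eps_E1 C f hf x y z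
  obtain ⟨b, hb⟩ := C.sq_mn x
  have r1 : eps C f x (C.mul z x) = eps C f x z := by
    rw [← eps_rel_right C f hf x (C.relv_comm z x), epsG C f hf]
  have r2 : eps C f (C.mul x (C.mul z x)) y = eps C f z y := by
    have rr : C.relv z (C.mul x (C.mul z x)) := by
      have s1 : C.relv (C.mul x (C.mul z x)) (C.mul x (C.mul x z)) :=
        C.relv_mul (C.relv_refl x) (C.relv_comm z x)
      have s2 : C.mul x (C.mul x z) = C.mn z b := by
        rw [← C.left_alt, hb, C.mn_mul_left, C.one_mul]
      exact C.relv_symm (C.relv_trans s1 (C.relv_symm ⟨b, s2⟩))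
    exact eps_rel_left C f hf y rr
  have r3 : eps C f x (C.mul z (C.mul x y)) = eps C f x (C.mul y z) := by
    have rr : C.relv (C.mul x (C.mul y z)) (C.mul z (C.mul x y)) := by
      have s1 : C.relv (C.mul z (C.mul x y)) (C.mul (C.mul z x) y) :=
        C.relv_symm (C.relv_assoc z x y)
      have s2 : C.relv (C.mul (C.mul z x) y) (C.mul (C.mul x z) y) :=
        C.relv_mul (C.relv_comm z x) (C.relv_refl y)
      have s3 : C.relv (C.mul (C.mul x z) y) (C.mul x (C.mul z y)) := C.relv_assoc x z y
      have s4 : C.relv (C.mul x (C.mul z y)) (C.mul x (C.mul y z)) :=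
        C.relv_mul (C.relv_refl x) (C.relv_comm z y)
      exact C.relv_symm (C.relv_trans (C.relv_trans (C.relv_trans s1 s2) s3) s4)
    rw [eps_rel_right C f hf x rr, epsG C f hf]
  rw [r1, r2, r3, eps_symm C f hf z x] at h
  rw [eps_symm C f hf (C.mul x y) z, eps_symm C f hf y z]
  have hb : ∀ p q r s t : Bool, ((p ^^ p) ^^ q) = ((r ^^ s) ^^ t) → (r ^^ s) = (q ^^ t) := by
    decide
  exact hb _ _ _ _ _ h

end CodeLoop


namespace CodeLoop

theorem bxor1 : ∀ s a b e : Bool, xor (xor s a) e = xor (xor s b) e → a = b := by decide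

theorem bxor2 : ∀ s t e : Bool, xor (xor s (xor (xor s t) e)) e = t := by decide

theorem bxor3 : ∀ s t u e1 e2 e3 e4 : Bool, xor e1 e2 = xor e3 e4 →
    xor (xor s (xor (xor t u) e3)) e4 = xor (xor (xor (xor s t) e1) u) e2 := by decide

variable (C : CodeLoop α) (f : α → α)

/-- Multiplication on the twisted double `α × Bool`. -/
noncomputable def Mmul (m m' : α × Bool) : α × Bool :=
  (C.mul m.1 m'.1, (m.2 ^^ m'.2) ^^ eps C f m.1 m'.1)

def Mone : α × Bool := (C.one, false)

def Mnu : α × Bool := (C.neg, false)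

def Mn (m : α × Bool) (b : Bool) : α × Bool := (C.mn m.1 b, m.2)

@[simp] theorem Mn_false (m : α × Bool) : C.Mn m false = m := by simp [Mn]

theorem Mone_mul (hf : C.toLoopStr.IsHalfAut f) (m : α × Bool) :
    Mmul C f (C.Mone) m = m := by
  obtain ⟨x, s⟩ := m
  simp [Mmul, Mone, C.one_mul, eps_one_left C f hf]

theorem Mmul_one (hf : C.toLoopStr.IsHalfAut f) (m : α × Bool) :
    Mmul C f m (C.Mone) = m := by
  obtain ⟨x, s⟩ := m
  simp [Mmul, Mone, C.mul_one, eps_one_right C f hf]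

theorem Mmul_nu (hf : C.toLoopStr.IsHalfAut f) (m : α × Bool) :
    Mmul C f m (C.Mnu) = C.Mn m true := by
  obtain ⟨x, s⟩ := m
  simp [Mmul, Mnu, Mn, mn, eps_nu_right C f hf]

theorem Mn_mul_left (hf : C.toLoopStr.IsHalfAut f) (m m' : α × Bool) (b : Bool) :
    Mmul C f (C.Mn m b) m' = C.Mn (Mmul C f m m') b := by
  obtain ⟨x, s⟩ := m; obtain ⟨y, t⟩ := m'
  simp [Mmul, Mn, C.mn_mul_left, eps_congr_left C f hf]

theorem Mn_mul_right (hf : C.toLoopStr.IsHalfAut f) (m m' : α × Bool) (b : Bool) :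
    Mmul C f m (C.Mn m' b) = C.Mn (Mmul C f m m') b := by
  obtain ⟨x, s⟩ := m; obtain ⟨y, t⟩ := m'
  simp [Mmul, Mn, C.mn_mul_right, eps_congr_right C f hf]

theorem Mn_Mn (m : α × Bool) (a b : Bool) : C.Mn (C.Mn m a) b = C.Mn m (a ^^ b) := by
  simp [Mn, C.mn_mn]

theorem Mcancel_left {a w w' : α × Bool} (h : Mmul C f a w = Mmul C f a w') : w = w' := by
  obtain ⟨x, s⟩ := a; obtain ⟨y, t⟩ := w; obtain ⟨z, u⟩ := w'
  simp only [Mmul, Prod.mk.injEq] at h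
  obtain ⟨h1, h2⟩ := h
  have hy : y = z := C.mlc h1
  subst hy
  have : t = u := bxor1 s t u _ h2
  rw [this]

theorem Mcancel_right {a w w' : α × Bool} (h : Mmul C f w a = Mmul C f w' a) : w = w' := by
  obtain ⟨x, s⟩ := a; obtain ⟨y, t⟩ := w; obtain ⟨z, u⟩ := w'
  simp only [Mmul, Prod.mk.injEq] at h
  obtain ⟨h1, h2⟩ := h
  have hy : y = z := C.mrc h1
  subst hy
  have : t = u := by
    have := h2
    cases t <;> cases u <;> cases s <;> cases eps C f y x <;> simp_all
  rw [this]

theorem Msolve_left (a b : α × Bool) : ∃ w, Mmul C f a w = b := by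
  obtain ⟨y, hy⟩ := (C.mulLeft_bij a.1).2 b.1
  refine ⟨(y, (a.2 ^^ b.2) ^^ eps C f a.1 y), ?_⟩
  obtain ⟨x, s⟩ := a; obtain ⟨z, u⟩ := b
  simp only [Mmul, Prod.mk.injEq]
  exact ⟨hy, bxor2 s u _⟩

theorem Msolve_right (a b : α × Bool) : ∃ w, Mmul C f w a = b := by
  obtain ⟨y, hy⟩ := (C.mulRight_bij a.1).2 b.1
  refine ⟨(y, (a.2 ^^ b.2) ^^ eps C f y a.1), ?_⟩
  obtain ⟨x, s⟩ := a; obtain ⟨z, u⟩ := b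
  simp only [Mmul, Prod.mk.injEq]
  refine ⟨hy, ?_⟩
  cases s <;> cases u <;> cases eps C f y x <;> rfl

/-- Equality up to `ν̂` in the twisted double. -/
def Mrel (m m' : α × Bool) : Prop := ∃ b, m' = C.Mn m b

theorem Mrel_refl (m : α × Bool) : C.Mrel m m := ⟨false, by simp⟩

theorem Mrel_symm {m m' : α × Bool} (h : C.Mrel m m') : C.Mrel m' m := by
  obtain ⟨b, rfl⟩ := h
  exact ⟨b, by rw [Mn_Mn]; cases b <;> simp⟩

theorem Mrel_trans {m m' m'' : α × Bool} (h1 : C.Mrel m m') (h2 : C.Mrel m' m'') :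
    C.Mrel m m'' := by
  obtain ⟨b, rfl⟩ := h1
  obtain ⟨b', rfl⟩ := h2
  exact ⟨b ^^ b', by rw [Mn_Mn]⟩

theorem Mrel_congr_left (hf : C.toLoopStr.IsHalfAut f) {a a' : α × Bool} (c : α × Bool)
    (h : C.Mrel a a') : C.Mrel (Mmul C f a c) (Mmul C f a' c) := by
  obtain ⟨b, rfl⟩ := h
  exact ⟨b, Mn_mul_left C f hf a c b⟩

theorem Mrel_congr_right (hf : C.toLoopStr.IsHalfAut f) (a : α × Bool) {c c' : α × Bool}
    (h : C.Mrel c c') : C.Mrel (Mmul C f a c) (Mmul C f a c') := by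
  obtain ⟨b, rfl⟩ := h
  exact ⟨b, Mn_mul_right C f hf a c b⟩

theorem Mrel_assoc (hf : C.toLoopStr.IsHalfAut f) (a b c : α × Bool) :
    C.Mrel (Mmul C f (Mmul C f a b) c) (Mmul C f a (Mmul C f b c)) := by
  obtain ⟨x, s⟩ := a; obtain ⟨y, t⟩ := b; obtain ⟨z, u⟩ := c
  have hsec : xor (xor s (xor (xor t u) (eps C f y z))) (eps C f x (C.mul y z))
      = xor (xor (xor (xor s t) (eps C f x y)) u) (eps C f (C.mul x y) z) :=
    bxor3 _ _ _ _ _ _ _ (eps_cocycle C f hf x y z)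
  rcases C.assoc_mem x y z with h | h
  · refine ⟨false, ?_⟩
    simp only [Mmul, Mn, Prod.mk.injEq, mn_false]
    exact ⟨h.symm, hsec⟩
  · refine ⟨true, ?_⟩
    simp only [Mmul, Mn, Prod.mk.injEq, mn_true]
    refine ⟨?_, hsec⟩
    rw [h, C.neg_mul_assoc₃, C.neg_neg, C.mul_one]

theorem Mrel_comm (hf : C.toLoopStr.IsHalfAut f) (a b : α × Bool) :
    C.Mrel (Mmul C f a b) (Mmul C f b a) := by
  obtain ⟨x, s⟩ := a; obtain ⟨y, t⟩ := b
  have hsec : xor (xor t s) (eps C f y x) = xor (xor s t) (eps C f x y) := by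
    rw [eps_symm C f hf y x]
    cases s <;> cases t <;> rfl
  rcases C.comm_mem y x with h | h
  · refine ⟨false, ?_⟩
    simp only [Mmul, Mn, Prod.mk.injEq, mn_false]
    exact ⟨h, hsec⟩
  · refine ⟨true, ?_⟩
    simp only [Mmul, Mn, Prod.mk.injEq, mn_true]
    exact ⟨h, hsec⟩

theorem Msq (hf : C.toLoopStr.IsHalfAut f) (m : α × Bool) :
    ∃ b, Mmul C f m m = C.Mn C.Mone b := by
  obtain ⟨x, s⟩ := m
  obtain ⟨b, hb⟩ := C.sq_mn x
  refine ⟨b, ?_⟩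
  simp only [Mmul, Mn, Mone, Prod.mk.injEq]
  refine ⟨hb, ?_⟩
  rw [eps_self C f hf]
  cases s <;> rfl

/-- Closedness in the twisted double. -/
def MClosed (T : Set (α × Bool)) : Prop :=
  C.Mone ∈ T ∧ (∀ a ∈ T, ∀ b ∈ T, Mmul C f a b ∈ T) ∧
    (∀ a ∈ T, ∀ w, Mmul C f a w = C.Mone → w ∈ T) ∧
    (∀ a ∈ T, ∀ w, Mmul C f w a = C.Mone → w ∈ T)

def MGood (T : Set (α × Bool)) : Prop :=
  MClosed C f T ∧ (C.one, true) ∉ T ∧ C.Mnu ∈ T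

theorem Msat (hf : C.toLoopStr.IsHalfAut f) {T : Set (α × Bool)} (hG : MGood C f T)
    {m : α × Bool} (hm : m ∈ T) (b : Bool) : C.Mn m b ∈ T := by
  cases b
  · simpa using hm
  · rw [← Mmul_nu C f hf]
    exact hG.1.2.1 m hm _ hG.2.2

theorem mem_of_Mrel (hf : C.toLoopStr.IsHalfAut f) {T : Set (α × Bool)} (hG : MGood C f T)
    {m m' : α × Bool} (h : C.Mrel m m') (hm : m ∈ T) : m' ∈ T := by
  obtain ⟨b, rfl⟩ := h
  exact Msat C f hf hG hm b

theorem Mnotboth (hf : C.toLoopStr.IsHalfAut f) {T : Set (α × Bool)} (hG : MGood C f T)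
    {x : α} {s : Bool} (h1 : (x, s) ∈ T) (h2 : (x, !s) ∈ T) : False := by
  have hp : Mmul C f (x, s) (x, !s) ∈ T := hG.1.2.1 _ h1 _ h2
  have he : Mmul C f (x, s) (x, !s) = (C.mul x x, true) := by
    simp only [Mmul, Prod.mk.injEq]
    refine ⟨by trivial, ?_⟩
    rw [eps_self C f hf]
    cases s <;> rfl
  rw [he] at hp
  obtain ⟨b, hb⟩ := C.sq_mn x
  cases b
  · simp only [mn_false] at hb
    rw [hb] at hp
    exact hG.2.1 hp
  · simp only [mn_true, C.one_mul] at hb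
    rw [hb] at hp
    have hq : Mmul C f (C.neg, true) C.Mnu ∈ T := hG.1.2.1 _ hp _ hG.2.2
    have he2 : Mmul C f (C.neg, true) C.Mnu = (C.one, true) := by
      simp only [Mmul, Mnu, Prod.mk.injEq]
      exact ⟨C.neg_neg, by simp [eps_self C f hf]⟩
    rw [he2] at hq
    exact hG.2.1 hq

end CodeLoop


namespace CodeLoop

variable (C : CodeLoop α) (f : α → α)

theorem MrelA (hf : C.toLoopStr.IsHalfAut f) (a b X : α × Bool) :
    C.Mrel (Mmul C f (Mmul C f a b) X) (Mmul C f (Mmul C f a X) b) := by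
  have t1 := Mrel_assoc C f hf a X b
  have t2 := Mrel_comm C f hf X b
  have t3 := Mrel_congr_right C f hf a t2
  have t4 := Mrel_assoc C f hf a b X
  exact C.Mrel_trans t4 (C.Mrel_symm (C.Mrel_trans t1 t3))

theorem MrelB (hf : C.toLoopStr.IsHalfAut f) (a b X : α × Bool) :
    C.Mrel (Mmul C f (Mmul C f a b) (Mmul C f X X))
      (Mmul C f (Mmul C f a X) (Mmul C f b X)) := by
  have s1 := Mrel_assoc C f hf (Mmul C f a b) X X
  have s2 := Mrel_congr_left C f hf X (MrelA C f hf a b X)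
  have s3 := Mrel_assoc C f hf (Mmul C f a X) b X
  exact C.Mrel_trans (C.Mrel_trans (C.Mrel_symm s1) s2) s3

theorem extend_good (hf : C.toLoopStr.IsHalfAut f) {T : Set (α × Bool)}
    (hG : MGood C f T) {x₀ : α} (hx : x₀ ∉ Prod.fst '' T) :
    MGood C f (T ∪ (fun t => Mmul C f t (x₀, false)) '' T) := by
  set X : α × Bool := (x₀, false) with hX
  set T' : Set (α × Bool) := T ∪ (fun t => Mmul C f t X) '' T with hT'
  have hTsub : T ⊆ T' := Set.subset_union_left
  have himgsub : ∀ t ∈ T, Mmul C f t X ∈ T' := fun t ht => Or.inr ⟨t, ht, rfl⟩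
  have sat' : ∀ m ∈ T', ∀ b, C.Mn m b ∈ T' := by
    rintro m (hm | ⟨t, ht, rfl⟩) b
    · exact hTsub (Msat C f hf hG hm b)
    · rw [← Mn_mul_left C f hf]
      exact himgsub _ (Msat C f hf hG ht b)
  have memrel' : ∀ {m m'}, C.Mrel m m' → m ∈ T' → m' ∈ T' := by
    rintro m m' ⟨b, rfl⟩ hm
    exact sat' m hm b
  refine ⟨⟨hTsub hG.1.1, ?_, ?_, ?_⟩, ?_, hTsub hG.2.2⟩
  · -- multiplication closure
    rintro a (ha | ⟨t1, ht1, rfl⟩) b (hb | ⟨t2, ht2, rfl⟩)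
    · exact hTsub (hG.1.2.1 a ha b hb)
    · exact memrel' (Mrel_assoc C f hf a t2 X) (himgsub _ (hG.1.2.1 a ha t2 ht2))
    · exact memrel' (MrelA C f hf t1 b X) (himgsub _ (hG.1.2.1 t1 ht1 b hb))
    · refine memrel' (MrelB C f hf t1 t2 X) ?_
      obtain ⟨c, hc⟩ := Msq C f hf X
      rw [hc, Mn_mul_right C f hf, Mmul_one C f hf]
      exact hTsub (Msat C f hf hG (hG.1.2.1 t1 ht1 t2 ht2) c)
  · -- left division closure
    rintro a (ha | ⟨t, ht, rfl⟩) w hw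
    · exact hTsub (hG.1.2.2.1 a ha w hw)
    · obtain ⟨u, hu⟩ := Msolve_left C f t C.Mone
      have huT : u ∈ T := hG.1.2.2.1 t ht u hu
      have hrel : C.Mrel (Mmul C f (Mmul C f t u) (Mmul C f X X))
          (Mmul C f (Mmul C f t X) (Mmul C f u X)) := MrelB C f hf t u X
      obtain ⟨c, hc⟩ := Msq C f hf X
      rw [hu, Mone_mul C f hf, hc] at hrel
      obtain ⟨d, hd⟩ := hrel
      rw [Mn_Mn] at hd
      have hkey : Mmul C f (Mmul C f t X) (C.Mn (Mmul C f u X) (c ^^ d)) = C.Mone := by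
        rw [Mn_mul_right C f hf, hd, Mn_Mn]
        have : ((c ^^ d) ^^ (c ^^ d)) = false := by cases c <;> cases d <;> rfl
        rw [this, Mn_false]
      have hweq : w = C.Mn (Mmul C f u X) (c ^^ d) :=
        Mcancel_left C f (hw.trans hkey.symm)
      rw [hweq]
      exact sat' _ (himgsub u huT) _
  · -- right division closure
    rintro a (ha | ⟨t, ht, rfl⟩) w hw
    · exact hTsub (hG.1.2.2.2 a ha w hw)
    · obtain ⟨u, hu⟩ := Msolve_right C f t C.Mone
      have huT : u ∈ T := hG.1.2.2.2 t ht u hu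
      have hrel : C.Mrel (Mmul C f (Mmul C f u t) (Mmul C f X X))
          (Mmul C f (Mmul C f u X) (Mmul C f t X)) := MrelB C f hf u t X
      obtain ⟨c, hc⟩ := Msq C f hf X
      rw [hu, Mone_mul C f hf, hc] at hrel
      obtain ⟨d, hd⟩ := hrel
      rw [Mn_Mn] at hd
      have hkey : Mmul C f (C.Mn (Mmul C f u X) (c ^^ d)) (Mmul C f t X) = C.Mone := by
        rw [Mn_mul_left C f hf, hd, Mn_Mn]
        have : ((c ^^ d) ^^ (c ^^ d)) = false := by cases c <;> cases d <;> rfl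
        rw [this, Mn_false]
      have hweq : w = C.Mn (Mmul C f u X) (c ^^ d) :=
        Mcancel_right C f (hw.trans hkey.symm)
      rw [hweq]
      exact sat' _ (himgsub u huT) _
  · -- (1, true) is not in T'
    rintro (hmem | ⟨t, ht, heq⟩)
    · exact hG.2.1 hmem
    · have h1 : C.mul t.1 x₀ = C.one := congrArg Prod.fst heq
      apply hx
      refine ⟨(x₀, t.2 ^^ eps C f t.1 x₀), ?_, rfl⟩
      apply hG.1.2.2.1 t ht
      obtain ⟨y, s⟩ := t
      simp only [Mmul, Mone, Prod.mk.injEq]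
      refine ⟨h1, ?_⟩
      cases s <;> cases eps C f y x₀ <;> rfl

end CodeLoop


namespace CodeLoop

variable (C : CodeLoop α)

theorem indep {B : Set α} (hB : C.toLoopStr.IsBasis B) {b : α} (hb : b ∈ B) :
    b ∉ C.toLoopStr.gen ((B \ {b}) ∪ {C.neg}) := by
  intro hmem
  have hHclosed : C.toLoopStr.IsClosed (C.toLoopStr.gen (B \ {b})) :=
    C.toLoopStr.gen_closed _
  have hBssub : B \ {b} ⊂ B := by
    refine ⟨Set.diff_subset, fun hcon => ?_⟩
    exact (hcon hb).2 rfl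
  have hnotgen := hB.2 _ hBssub
  by_cases hν : C.neg ∈ C.toLoopStr.gen (B \ {b})
  · have hsub : C.toLoopStr.gen ((B \ {b}) ∪ {C.neg}) ⊆ C.toLoopStr.gen (B \ {b}) := by
      apply C.toLoopStr.gen_min _ hHclosed
      rintro x (hx | hx)
      · exact C.toLoopStr.gen_subset _ hx
      · rw [Set.mem_singleton_iff] at hx
        subst hx; exact hν
    have hbH : b ∈ C.toLoopStr.gen (B \ {b}) := hsub hmem
    have hBH : B ⊆ C.toLoopStr.gen (B \ {b}) := by
      intro x hx
      by_cases hxb : x = b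
      · subst hxb; exact hbH
      · exact C.toLoopStr.gen_subset _ ⟨hx, hxb⟩
    have hgsub : C.toLoopStr.gen B ⊆ C.toLoopStr.gen (B \ {b}) :=
      C.toLoopStr.gen_min hBH hHclosed
    exact hnotgen (Set.eq_univ_of_univ_subset (hB.1 ▸ hgsub))
  · set K : Set α := {w | ∃ h ∈ C.toLoopStr.gen (B \ {b}), ∃ c : Bool, w = C.mn h c}
      with hK
    have hKclosed : C.toLoopStr.IsClosed K := by
      refine ⟨⟨C.one, hHclosed.1, false, rfl⟩, ?_, ?_, ?_⟩
      · rintro x ⟨h1, hh1, c1, rfl⟩ y ⟨h2, hh2, c2, rfl⟩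
        refine ⟨C.mul h1 h2, hHclosed.2.1 _ hh1 _ hh2, c2 ^^ c1, ?_⟩
        rw [C.mn_mul_left, C.mn_mul_right, C.mn_mn]
      · rintro x ⟨h, hh, c, rfl⟩ y hy
        obtain ⟨u, hu0⟩ := (C.mulLeft_bij h).2 C.one
        have hu : C.mul h u = C.one := hu0
        have huH := hHclosed.2.2.1 h hh u hu
        have hkey : C.mul (C.mn h c) (C.mn u c) = C.one := by
          rw [C.mn_mul_left, C.mn_mul_right, C.mn_mn, hu]
          cases c <;> rfl
        exact ⟨u, huH, c, C.mlc (hy.trans hkey.symm)⟩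
      · rintro x ⟨h, hh, c, rfl⟩ y hy
        obtain ⟨u, hu0⟩ := (C.mulRight_bij h).2 C.one
        have hu : C.mul u h = C.one := hu0
        have huH := hHclosed.2.2.2 h hh u hu
        have hkey : C.mul (C.mn u c) (C.mn h c) = C.one := by
          rw [C.mn_mul_left, C.mn_mul_right, C.mn_mn, hu]
          cases c <;> rfl
        exact ⟨u, huH, c, C.mrc (hy.trans hkey.symm)⟩
    have hsubK : C.toLoopStr.gen ((B \ {b}) ∪ {C.neg}) ⊆ K := by
      apply C.toLoopStr.gen_min _ hKclosed
      rintro x (hx | hx)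
      · exact ⟨x, C.toLoopStr.gen_subset _ hx, false, rfl⟩
      · rw [Set.mem_singleton_iff] at hx
        subst hx
        exact ⟨C.one, hHclosed.1, true, by simp [mn, C.one_mul]⟩
    have hbK : b ∈ K := hsubK hmem
    have hBK : B ⊆ K := by
      intro x hx
      by_cases hxb : x = b
      · subst hxb; exact hbK
      · exact ⟨x, C.toLoopStr.gen_subset _ ⟨hx, hxb⟩, false, rfl⟩
    have hKuniv : ∀ x : α, x ∈ K := by
      have hgsub : C.toLoopStr.gen B ⊆ K := C.toLoopStr.gen_min hBK hKclosed
      rw [hB.1] at hgsub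
      exact fun x => hgsub (Set.mem_univ x)
    obtain ⟨w, hw⟩ := C.neg_is_square
    obtain ⟨h', hh', c, rfl⟩ := hKuniv w
    have hsq : C.mul h' h' = C.neg := by
      rw [C.mn_mul_left, C.mn_mul_right, C.mn_mn] at hw
      cases c <;> simpa using hw
    exact hν (hsq ▸ hHclosed.2.1 h' hh' h' hh')

variable (f : α → α)

theorem exists_graph (hf : C.toLoopStr.IsHalfAut f) {B : Set α}
    (hB : C.toLoopStr.IsBasis B) :
    ∃ T : Set (α × Bool), MGood C f T ∧ ∀ b ∈ B, (b, false) ∈ T := by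
  classical
  have hfin : Finite α := C.finite
  have hBfin : B.Finite := Set.toFinite B
  have main : ∀ F : Finset α, ↑F ⊆ B → ∃ T, MGood C f T ∧ (∀ b ∈ F, (b, false) ∈ T) ∧
      Prod.fst '' T ⊆ C.toLoopStr.gen (↑F ∪ {C.neg}) := by
    intro F
    induction F using Finset.induction_on with
    | empty =>
      intro _
      have hMM : Mmul C f C.Mnu C.Mnu = C.Mone := by
        simp only [Mmul, Mnu, Mone, Prod.mk.injEq]
        exact ⟨C.neg_neg, by simp [eps_self C f hf]⟩
      refine ⟨{C.Mone, C.Mnu}, ⟨⟨Or.inl rfl, ?_, ?_, ?_⟩, ?_, Or.inr rfl⟩, by simp, ?_⟩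
      · rintro a (rfl | rfl) b (rfl | rfl)
        · rw [Mone_mul C f hf]; exact Or.inl rfl
        · rw [Mone_mul C f hf]; exact Or.inr rfl
        · rw [Mmul_one C f hf]; exact Or.inr rfl
        · rw [hMM]; exact Or.inl rfl
      · rintro a (rfl | rfl) w hw
        · rw [Mone_mul C f hf] at hw; exact Or.inl hw
        · have := Mcancel_left C f (hw.trans hMM.symm)
          exact Or.inr this
      · rintro a (rfl | rfl) w hw
        · rw [Mmul_one C f hf] at hw; exact Or.inl hw
        · have := Mcancel_right C f (hw.trans hMM.symm)
          exact Or.inr this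
      · rintro (hcon | hcon)
        · exact Bool.noConfusion (congrArg Prod.snd hcon)
        · exact C.neg_ne_one ((congrArg Prod.fst hcon).symm)
      · rintro x ⟨m, (rfl | rfl), rfl⟩
        · exact (C.toLoopStr.gen_closed _).1
        · exact C.toLoopStr.gen_subset _ (Or.inr rfl)
    | @insert a F ha ih =>
      intro hsub
      have hFsub : ↑F ⊆ B := fun x hx => hsub (by simp [hx])
      obtain ⟨T, hG, hmem, himg⟩ := ih hFsub
      have haB : a ∈ B := hsub (by simp)
      have hna : a ∉ Prod.fst '' T := by
        intro hmem2
        have h1 : a ∈ C.toLoopStr.gen (↑F ∪ {C.neg}) := himg hmem2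
        have h2 : (↑F ∪ {C.neg} : Set α) ⊆ (B \ {a}) ∪ {C.neg} := by
          rintro x (hx | hx)
          · exact Or.inl ⟨hFsub hx, fun hxa => ha (hxa ▸ hx)⟩
          · exact Or.inr hx
        exact indep C hB haB (C.toLoopStr.gen_mono h2 h1)
      refine ⟨T ∪ (fun t => Mmul C f t (a, false)) '' T,
        extend_good C f hf hG hna, ?_, ?_⟩
      · intro b hb
        rcases Finset.mem_insert.1 hb with rfl | hbF
        · exact Or.inr ⟨C.Mone, hG.1.1, Mone_mul C f hf _⟩
        · exact Or.inl (hmem b hbF)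
      · have hcoe : (↑F ∪ {C.neg} : Set α) ⊆ (↑(insert a F) ∪ {C.neg} : Set α) := by
          rintro x (hx | hx)
          · exact Or.inl (by simp [hx])
          · exact Or.inr hx
        rintro x ⟨m, (hm | ⟨t, ht, rfl⟩), rfl⟩
        · exact C.toLoopStr.gen_mono hcoe (himg ⟨m, hm, rfl⟩)
        · refine (C.toLoopStr.gen_closed _).2.1 _ ?_ _ ?_
          · exact C.toLoopStr.gen_mono hcoe (himg ⟨t, ht, rfl⟩)
          · exact C.toLoopStr.gen_subset _ (Or.inl (by simp))
  obtain ⟨T, hG, hmem, -⟩ := main hBfin.toFinset (by simp)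
  exact ⟨T, hG, fun b hb => hmem b (hBfin.mem_toFinset.2 hb)⟩

end CodeLoop


end Stmt7Aux
/-- Every half-automorphism of a code loop factors uniquely as an automorphism followed by
a half-automorphism fixing every element of a fixed basis. -/
theorem stmt7 {α : Type*} (C : CodeLoop α) (B : Set α) (hB : C.toLoopStr.IsBasis B)
    (f : α → α) (hf : C.toLoopStr.IsHalfAut f) :
    ∃! p : (α → α) × (α → α),
      C.toLoopStr.IsAut p.1 ∧ C.toLoopStr.IsHalfAut p.2 ∧
        (∀ b ∈ B, p.2 b = b) ∧ f = p.1 ∘ p.2 := by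
  classical
  have hfin : Finite α := C.finite
  obtain ⟨T, hG, hTB⟩ := CodeLoop.exists_graph C f hf hB
  -- the first projection of T is everything
  have hfst : ∀ x : α, ∃ s, (x, s) ∈ T := by
    have hclosed : C.toLoopStr.IsClosed (Prod.fst '' T) := by
      refine ⟨⟨C.Mone, hG.1.1, rfl⟩, ?_, ?_, ?_⟩
      · rintro x ⟨mx, hmx, rfl⟩ y ⟨my, hmy, rfl⟩
        exact ⟨CodeLoop.Mmul C f mx my, hG.1.2.1 _ hmx _ hmy, rfl⟩
      · rintro x ⟨mx, hmx, rfl⟩ y hy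
        refine ⟨(y, mx.2 ^^ CodeLoop.eps C f mx.1 y), hG.1.2.2.1 mx hmx _ ?_, rfl⟩
        obtain ⟨x, s⟩ := mx
        simp only [CodeLoop.Mmul, CodeLoop.Mone, Prod.mk.injEq]
        exact ⟨hy, by cases s <;> cases CodeLoop.eps C f x y <;> rfl⟩
      · rintro x ⟨mx, hmx, rfl⟩ y hy
        refine ⟨(y, mx.2 ^^ CodeLoop.eps C f y mx.1), hG.1.2.2.2 mx hmx _ ?_, rfl⟩
        obtain ⟨x, s⟩ := mx
        simp only [CodeLoop.Mmul, CodeLoop.Mone, Prod.mk.injEq]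
        exact ⟨hy, by cases s <;> cases CodeLoop.eps C f y x <;> rfl⟩
    have huniv : Prod.fst '' T = Set.univ :=
      Set.eq_univ_of_univ_subset (hB.1 ▸
        C.toLoopStr.gen_min (fun b hb => ⟨(b, false), hTB b hb, rfl⟩) hclosed)
    intro x
    have hx : x ∈ Prod.fst '' T := huniv ▸ Set.mem_univ x
    obtain ⟨m, hm, hm1⟩ := hx
    exact ⟨m.2, by rw [← hm1]; simpa using hm⟩
  set δ : α → Bool := fun x => if (x, true) ∈ T then true else false with hδ
  have hδT : ∀ x, (x, δ x) ∈ T := by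
    intro x
    by_cases hx : (x, true) ∈ T
    · simpa [hδ, hx] using hx
    · obtain ⟨s, hs⟩ := hfst x
      cases s
      · simpa [hδ, hx] using hs
      · exact absurd hs hx
  have hgraph : ∀ x s, (x, s) ∈ T → δ x = s := by
    intro x s hs
    cases s
    · by_cases hx : (x, true) ∈ T
      · exact absurd hx (fun hx' => CodeLoop.Mnotboth C f hf hG hs hx')
      · simp [hδ, hx]
    · simp [hδ, hs]
  have hδmul : ∀ x y,
      δ (C.mul x y) = ((δ x ^^ δ y) ^^ CodeLoop.eps C f x y) := by
    intro x y
    exact hgraph _ _ (hG.1.2.1 _ (hδT x) _ (hδT y))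
  have hδB : ∀ b ∈ B, δ b = false := fun b hb => hgraph b false (hTB b hb)
  have hδmn : ∀ x b, δ (C.mn x b) = δ x := by
    intro x b
    exact hgraph _ _ (CodeLoop.Msat C f hf hG (hδT x) b)
  -- the automorphism
  set h : α → α := fun x => C.mn (f x) (δ x) with hh
  have hmul : ∀ x y, h (C.mul x y) = C.mul (h x) (h y) := by
    intro x y
    show C.mn (f (C.mul x y)) (δ (C.mul x y))
      = C.mul (C.mn (f x) (δ x)) (C.mn (f y) (δ y))
    rw [CodeLoop.eps_spec C f hf x y, C.mn_mn, hδmul, C.mn_mul_left, C.mn_mul_right,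
      C.mn_mn]
    congr 1
    cases δ x <;> cases δ y <;> cases CodeLoop.eps C f x y <;> rfl
  have hinj : Function.Injective h := by
    intro p q hpq0
    have hpq : C.mn (f p) (δ p) = C.mn (f q) (δ q) := hpq0
    by_cases hd : δ p = δ q
    · rw [hd] at hpq
      exact hf.1.1 (C.mn_inj_x hpq)
    · have h1 : f q = C.mn (f p) (δ p ^^ δ q) := by
        calc f q = C.mn (C.mn (f q) (δ q)) (δ q) := by
              rw [C.mn_mn]; cases δ q <;> simp
          _ = C.mn (C.mn (f p) (δ p)) (δ q) := by rw [hpq]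
          _ = C.mn (f p) (δ p ^^ δ q) := C.mn_mn _ _ _
      have hdp : (δ p ^^ δ q) = true := by
        cases hp' : δ p <;> cases hq' : δ q <;> simp_all
      rw [hdp] at h1
      have h2 : f q = f (C.mn p true) := by rw [CodeLoop.f_mn C f hf]; exact h1
      have hq : q = C.mn p true := hf.1.1 h2
      have : δ q = δ p := by rw [hq]; exact hδmn p true
      exact absurd this.symm hd
  have hbij : Function.Bijective h := Finite.injective_iff_bijective.1 hinj
  set E := Equiv.ofBijective h hbij with hE
  set φ : α → α := fun x => E.symm (f x) with hφ
  have hhφ : ∀ x, h (φ x) = f x := fun x => E.apply_symm_apply (f x)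
  have hφbij : Function.Bijective φ := E.symm.bijective.comp hf.1
  have hφhalf : ∀ x y, φ (C.mul x y) = C.mul (φ x) (φ y) ∨
      φ (C.mul x y) = C.mul (φ y) (φ x) := by
    intro x y
    rcases hf.2 x y with hc | hc
    · left; apply hinj; rw [hhφ, hmul, hhφ, hhφ]; exact hc
    · right; apply hinj; rw [hhφ, hmul, hhφ, hhφ]; exact hc
  have hhB : ∀ b ∈ B, h b = f b := by
    intro b hb
    show C.mn (f b) (δ b) = f b
    rw [hδB b hb, C.mn_false]
  have hφB : ∀ b ∈ B, φ b = b := by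
    intro b hb
    apply hinj
    rw [hhφ]
    exact (hhB b hb).symm
  have hfeq : f = h ∘ φ := funext fun x => (hhφ x).symm
  have hone : h C.one = C.one := by
    have h0 := hmul C.one C.one
    rw [C.one_mul] at h0
    apply C.mlc (a := h C.one)
    rw [C.mul_one]
    exact h0.symm
  refine ⟨(h, φ), ⟨⟨hbij, hmul⟩, ⟨hφbij, hφhalf⟩, hφB, hfeq⟩, ?_⟩
  rintro ⟨h', φ'⟩ ⟨⟨h'bij0, h'mul0⟩, ⟨φ'bij0, φ'half0⟩, hφ'B0, hfeq'0⟩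
  have h'mul : ∀ x y, h' (C.mul x y) = C.mul (h' x) (h' y) := h'mul0
  have hφ'B : ∀ b ∈ B, φ' b = b := hφ'B0
  have hfeq' : f = h' ∘ φ' := hfeq'0
  have h'one : h' C.one = C.one := by
    have h0 := h'mul C.one C.one
    rw [C.one_mul] at h0
    apply C.mlc (a := h' C.one)
    rw [C.mul_one]
    exact h0.symm
  have hEq : ∀ x, h' x = h x := by
    have hBeq : B ⊆ {x | h' x = h x} := by
      intro b hb
      have h1 : f b = h' (φ' b) := congrFun hfeq' b
      rw [hφ'B b hb] at h1
      show h' b = h b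
      rw [← h1, hhB b hb]
    have hclosed2 : C.toLoopStr.IsClosed {x | h' x = h x} := by
      refine ⟨?_, ?_, ?_, ?_⟩
      · show h' C.one = h C.one
        rw [hone, h'one]
      · intro x hx y hy
        show h' (C.mul x y) = h (C.mul x y)
        rw [h'mul, hmul, hx, hy]
      · intro x hx y hxy
        have hx' : h' x = h x := hx
        show h' y = h y
        apply C.mlc (a := h x)
        have e1 : C.mul (h' x) (h' y) = C.one := by rw [← h'mul, hxy, h'one]
        have e2 : C.mul (h x) (h y) = C.one := by rw [← hmul, hxy, hone]
        rw [hx'] at e1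
        exact e1.trans e2.symm
      · intro x hx y hxy
        have hx' : h' x = h x := hx
        show h' y = h y
        apply C.mrc (a := h x)
        have e1 : C.mul (h' y) (h' x) = C.one := by rw [← h'mul, hxy, h'one]
        have e2 : C.mul (h y) (h x) = C.one := by rw [← hmul, hxy, hone]
        rw [hx'] at e1
        exact e1.trans e2.symm
    intro x
    have hgsub : C.toLoopStr.gen B ⊆ {x | h' x = h x} :=
      C.toLoopStr.gen_min hBeq hclosed2
    rw [hB.1] at hgsub
    exact hgsub (Set.mem_univ x)
  have hh'eq : h' = h := funext hEq
  have hφ'eq : φ' = φ := by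
    funext x
    apply hinj
    rw [hhφ]
    have h1 := congrFun hfeq' x
    rw [hh'eq] at h1
    exact h1.symm
  rw [hh'eq, hφ'eq]
end
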